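/- The full subcategory of Subset-Freyd consisting of the Subset-Freyd categories C : M^op × M → Subset for which the distinguished subset of C(a,b) equals C(id, M(a,b))(idt(⋆)) (the image of the pure morphisms) is a full coreflective subcategory of Subset-Freyd and is equivalent to the category Freyd of Freyd categories. -/

import Mathlib

set_option linter.unusedVariables false
open CategoryTheory CategoryTheory.Limits MonoidalCategory

universe w v u v₁ u₁ v₂ u₂ v₃ u₃

/-- The data of a monoidal structure on a category (tensor, unit, structural morphisms). -/
structure MonStrData (V : Type u) [Category.{v} V] where
  t : V → V → V
  tHom : ∀ {X₁ Y₁ X₂ Y₂ : V}, (X₁ ⟶ Y₁) → (X₂ ⟶ Y₂) → (t X₁ X₂ ⟶ t Y₁ Y₂)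
  unit : V
  aHom : ∀ X Y Z : V, t (t X Y) Z ⟶ t X (t Y Z)
  aInv : ∀ X Y Z : V, t X (t Y Z) ⟶ t (t X Y) Z
  lHom : ∀ X : V, t unit X ⟶ X
  lInv : ∀ X : V, X ⟶ t unit X
  rHom : ∀ X : V, t X unit ⟶ X
  rInv : ∀ X : V, X ⟶ t X unit

/-- The data of a monoidal structure is an actual monoidal structure. -/
structure IsMonStr {V : Type u} [Category.{v} V] (m : MonStrData V) : Prop where
  tHom_id : ∀ X Y : V, m.tHom (𝟙 X) (𝟙 Y) = 𝟙 (m.t X Y)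
  tHom_comp : ∀ {X₁ Y₁ Z₁ X₂ Y₂ Z₂ : V} (f₁ : X₁ ⟶ Y₁) (g₁ : Y₁ ⟶ Z₁) (f₂ : X₂ ⟶ Y₂)
    (g₂ : Y₂ ⟶ Z₂), m.tHom (f₁ ≫ g₁) (f₂ ≫ g₂) = m.tHom f₁ f₂ ≫ m.tHom g₁ g₂
  a_hom_inv : ∀ X Y Z : V, m.aHom X Y Z ≫ m.aInv X Y Z = 𝟙 _
  a_inv_hom : ∀ X Y Z : V, m.aInv X Y Z ≫ m.aHom X Y Z = 𝟙 _
  a_nat : ∀ {X₁ Y₁ X₂ Y₂ X₃ Y₃ : V} (f₁ : X₁ ⟶ Y₁) (f₂ : X₂ ⟶ Y₂) (f₃ : X₃ ⟶ Y₃),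
    m.tHom (m.tHom f₁ f₂) f₃ ≫ m.aHom Y₁ Y₂ Y₃ = m.aHom X₁ X₂ X₃ ≫ m.tHom f₁ (m.tHom f₂ f₃)
  l_hom_inv : ∀ X : V, m.lHom X ≫ m.lInv X = 𝟙 _
  l_inv_hom : ∀ X : V, m.lInv X ≫ m.lHom X = 𝟙 _
  l_nat : ∀ {X Y : V} (f : X ⟶ Y), m.tHom (𝟙 m.unit) f ≫ m.lHom Y = m.lHom X ≫ f
  r_hom_inv : ∀ X : V, m.rHom X ≫ m.rInv X = 𝟙 _
  r_inv_hom : ∀ X : V, m.rInv X ≫ m.rHom X = 𝟙 _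
  r_nat : ∀ {X Y : V} (f : X ⟶ Y), m.tHom f (𝟙 m.unit) ≫ m.rHom Y = m.rHom X ≫ f
  triangle : ∀ X Y : V,
    m.aHom X m.unit Y ≫ m.tHom (𝟙 X) (m.lHom Y) = m.tHom (m.rHom X) (𝟙 Y)
  pentagon : ∀ W X Y Z : V,
    m.tHom (m.aHom W X Y) (𝟙 Z) ≫ m.aHom W (m.t X Y) Z ≫ m.tHom (𝟙 W) (m.aHom X Y Z)
      = m.aHom (m.t W X) Y Z ≫ m.aHom W X (m.t Y Z)

/-- The data of a duoidal category structure: a "parallel" monoidal structure `p = (∗, J)`,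
a "sequential" monoidal structure `s = (∘, I)`, the interchange `ζ`, and `Δ`, `∇`, `ε`. -/
structure DuoidalData (V : Type u) [Category.{v} V] where
  p : MonStrData V
  s : MonStrData V
  zeta : ∀ A B C D : V, p.t (s.t A B) (s.t C D) ⟶ s.t (p.t A C) (p.t B D)
  delta : p.unit ⟶ s.t p.unit p.unit
  nabla : p.t s.unit s.unit ⟶ s.unit
  eps : p.unit ⟶ s.unit

/-- The data of a duoidal structure is an actual duoidal category structure. -/
structure IsDuoidal {V : Type u} [Category.{v} V] (d : DuoidalData V) : Prop where
  p_mon : IsMonStr d.p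
  s_mon : IsMonStr d.s
  zeta_nat : ∀ {A A' B B' C C' D D' : V} (f : A ⟶ A') (g : B ⟶ B') (h : C ⟶ C') (k : D ⟶ D'),
    d.p.tHom (d.s.tHom f g) (d.s.tHom h k) ≫ d.zeta A' B' C' D'
      = d.zeta A B C D ≫ d.s.tHom (d.p.tHom f h) (d.p.tHom g k)
  -- (I, ∇, ε) is a monoid in (V, ∗, J)
  nabla_assoc : d.p.tHom d.nabla (𝟙 d.s.unit) ≫ d.nabla
      = d.p.aHom d.s.unit d.s.unit d.s.unit ≫ d.p.tHom (𝟙 d.s.unit) d.nabla ≫ d.nabla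
  nabla_eps_left : d.p.tHom d.eps (𝟙 d.s.unit) ≫ d.nabla = d.p.lHom d.s.unit
  nabla_eps_right : d.p.tHom (𝟙 d.s.unit) d.eps ≫ d.nabla = d.p.rHom d.s.unit
  -- (J, Δ, ε) is a comonoid in (V, ∘, I)
  delta_coassoc : d.delta ≫ d.s.tHom d.delta (𝟙 d.p.unit) ≫ d.s.aHom d.p.unit d.p.unit d.p.unit
      = d.delta ≫ d.s.tHom (𝟙 d.p.unit) d.delta
  delta_eps_left : d.delta ≫ d.s.tHom d.eps (𝟙 d.p.unit) ≫ d.s.lHom d.p.unit = 𝟙 d.p.unit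
  delta_eps_right : d.delta ≫ d.s.tHom (𝟙 d.p.unit) d.eps ≫ d.s.rHom d.p.unit = 𝟙 d.p.unit
  -- compatibility of ζ with the associator of ∗
  hexagon_p : ∀ A B C D E F : V,
    d.p.tHom (d.zeta A B C D) (𝟙 (d.s.t E F)) ≫ d.zeta (d.p.t A C) (d.p.t B D) E F
        ≫ d.s.tHom (d.p.aHom A C E) (d.p.aHom B D F)
      = d.p.aHom (d.s.t A B) (d.s.t C D) (d.s.t E F) ≫ d.p.tHom (𝟙 (d.s.t A B)) (d.zeta C D E F)
        ≫ d.zeta A B (d.p.t C E) (d.p.t D F)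
  -- compatibility of ζ with the associator of ∘
  hexagon_s : ∀ A B C D E F : V,
    d.zeta (d.s.t A B) C (d.s.t D E) F ≫ d.s.tHom (d.zeta A B D E) (𝟙 (d.p.t C F))
        ≫ d.s.aHom (d.p.t A D) (d.p.t B E) (d.p.t C F)
      = d.p.tHom (d.s.aHom A B C) (d.s.aHom D E F) ≫ d.zeta A (d.s.t B C) D (d.s.t E F)
        ≫ d.s.tHom (𝟙 (d.p.t A D)) (d.zeta B C E F)
  -- compatibility of ζ with the unitors of ∗ via Δ
  unit_p_left : ∀ A B : V,
    d.p.tHom d.delta (𝟙 (d.s.t A B)) ≫ d.zeta d.p.unit d.p.unit A B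
        ≫ d.s.tHom (d.p.lHom A) (d.p.lHom B)
      = d.p.lHom (d.s.t A B)
  unit_p_right : ∀ A B : V,
    d.p.tHom (𝟙 (d.s.t A B)) d.delta ≫ d.zeta A B d.p.unit d.p.unit
        ≫ d.s.tHom (d.p.rHom A) (d.p.rHom B)
      = d.p.rHom (d.s.t A B)
  -- compatibility of ζ with the unitors of ∘ via ∇
  unit_s_left : ∀ A B : V,
    d.zeta d.s.unit A d.s.unit B ≫ d.s.tHom d.nabla (𝟙 (d.p.t A B)) ≫ d.s.lHom (d.p.t A B)
      = d.p.tHom (d.s.lHom A) (d.s.lHom B)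
  unit_s_right : ∀ A B : V,
    d.zeta A d.s.unit B d.s.unit ≫ d.s.tHom (𝟙 (d.p.t A B)) d.nabla ≫ d.s.rHom (d.p.t A B)
      = d.p.tHom (d.s.rHom A) (d.s.rHom B)

/-- The data of a `V`-Freyd category over a monoidal category `M`,
relative to duoidal data `d` on `V`. -/
structure VFreydData {V : Type u₁} [Category.{v₁} V] (d : DuoidalData V)
    (M : Type u₂) [Category.{v₂} M] [MonoidalCategory M] where
  obj : M → M → V
  map : ∀ {a a' b b' : M}, (a' ⟶ a) → (b ⟶ b') → (obj a b ⟶ obj a' b')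
  idt : ∀ a : M, d.s.unit ⟶ obj a a
  seq : ∀ a b c : M, d.s.t (obj a b) (obj b c) ⟶ obj a c
  zero : d.p.unit ⟶ obj (𝟙_ M) (𝟙_ M)
  par : ∀ a₁ b₁ a₂ b₂ : M, d.p.t (obj a₁ b₁) (obj a₂ b₂) ⟶ obj (a₁ ⊗ a₂) (b₁ ⊗ b₂)

/-- The data of a `V`-Freyd category is an actual `V`-Freyd category:
bifunctoriality, (extra)naturality of the structure maps, and the eight axioms. -/
structure IsVFreyd {V : Type u₁} [Category.{v₁} V] {d : DuoidalData V}
    {M : Type u₂} [Category.{v₂} M] [MonoidalCategory M] (C : VFreydData d M) : Prop where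
  map_id : ∀ a b : M, C.map (𝟙 a) (𝟙 b) = 𝟙 (C.obj a b)
  map_comp : ∀ {a a' a'' b b' b'' : M} (f : a' ⟶ a) (f' : a'' ⟶ a') (g : b ⟶ b') (g' : b' ⟶ b''),
    C.map (f' ≫ f) (g ≫ g') = C.map f g ≫ C.map f' g'
  idt_extra : ∀ {a b : M} (f : a ⟶ b),
    C.idt a ≫ C.map (𝟙 a) f = C.idt b ≫ C.map f (𝟙 b)
  seq_nat : ∀ {a a' c c' : M} (f : a' ⟶ a) (g : c ⟶ c') (b : M),
    d.s.tHom (C.map f (𝟙 b)) (C.map (𝟙 b) g) ≫ C.seq a' b c' = C.seq a b c ≫ C.map f g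
  seq_extra : ∀ {b b' : M} (f : b ⟶ b') (a c : M),
    d.s.tHom (C.map (𝟙 a) f) (𝟙 (C.obj b' c)) ≫ C.seq a b' c
      = d.s.tHom (𝟙 (C.obj a b)) (C.map f (𝟙 c)) ≫ C.seq a b c
  par_nat : ∀ {a₁ a₁' b₁ b₁' a₂ a₂' b₂ b₂' : M}
    (f₁ : a₁' ⟶ a₁) (g₁ : b₁ ⟶ b₁') (f₂ : a₂' ⟶ a₂) (g₂ : b₂ ⟶ b₂'),
    d.p.tHom (C.map f₁ g₁) (C.map f₂ g₂) ≫ C.par a₁' b₁' a₂' b₂'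
      = C.par a₁ b₁ a₂ b₂ ≫ C.map (f₁ ⊗ₘ f₂) (g₁ ⊗ₘ g₂)
  -- (i) idt is the identity for seq
  idt_seq : ∀ a b : M,
    d.s.tHom (C.idt a) (𝟙 (C.obj a b)) ≫ C.seq a a b = d.s.lHom (C.obj a b)
  seq_idt : ∀ a b : M,
    d.s.tHom (𝟙 (C.obj a b)) (C.idt b) ≫ C.seq a b b = d.s.rHom (C.obj a b)
  -- (ii) seq is associative
  seq_assoc : ∀ a b c e : M,
    d.s.tHom (C.seq a b c) (𝟙 (C.obj c e)) ≫ C.seq a c e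
      = d.s.aHom (C.obj a b) (C.obj b c) (C.obj c e)
          ≫ d.s.tHom (𝟙 (C.obj a b)) (C.seq b c e) ≫ C.seq a b e
  -- (iii) zero is the identity for par
  zero_par : ∀ a b : M,
    d.p.tHom C.zero (𝟙 (C.obj a b)) ≫ C.par (𝟙_ M) (𝟙_ M) a b
        ≫ C.map (λ_ a).inv (λ_ b).hom
      = d.p.lHom (C.obj a b)
  par_zero : ∀ a b : M,
    d.p.tHom (𝟙 (C.obj a b)) C.zero ≫ C.par a b (𝟙_ M) (𝟙_ M)
        ≫ C.map (ρ_ a).inv (ρ_ b).hom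
      = d.p.rHom (C.obj a b)
  -- (iv) par is associative
  par_assoc : ∀ a₁ b₁ a₂ b₂ a₃ b₃ : M,
    d.p.tHom (C.par a₁ b₁ a₂ b₂) (𝟙 (C.obj a₃ b₃)) ≫ C.par (a₁ ⊗ a₂) (b₁ ⊗ b₂) a₃ b₃
        ≫ C.map (α_ a₁ a₂ a₃).inv (α_ b₁ b₂ b₃).hom
      = d.p.aHom (C.obj a₁ b₁) (C.obj a₂ b₂) (C.obj a₃ b₃)
          ≫ d.p.tHom (𝟙 (C.obj a₁ b₁)) (C.par a₂ b₂ a₃ b₃) ≫ C.par a₁ b₁ (a₂ ⊗ a₃) (b₂ ⊗ b₃)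
  -- (v) idt respects zero
  idt_zero : d.eps ≫ C.idt (𝟙_ M) = C.zero
  -- (vi) idt respects par
  idt_par : ∀ a b : M,
    d.nabla ≫ C.idt (a ⊗ b) = d.p.tHom (C.idt a) (C.idt b) ≫ C.par a a b b
  -- (vii) seq respects zero
  seq_zero : d.delta ≫ d.s.tHom C.zero C.zero ≫ C.seq (𝟙_ M) (𝟙_ M) (𝟙_ M) = C.zero
  -- (viii) seq respects par (exchange)
  exchange : ∀ a₁ b₁ c₁ a₂ b₂ c₂ : M,
    d.zeta (C.obj a₁ b₁) (C.obj b₁ c₁) (C.obj a₂ b₂) (C.obj b₂ c₂)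
        ≫ d.s.tHom (C.par a₁ b₁ a₂ b₂) (C.par b₁ c₁ b₂ c₂)
        ≫ C.seq (a₁ ⊗ a₂) (b₁ ⊗ b₂) (c₁ ⊗ c₂)
      = d.p.tHom (C.seq a₁ b₁ c₁) (C.seq a₂ b₂ c₂) ≫ C.par a₁ c₁ a₂ c₂

/-- The data of a strong monoidal functor. -/
structure StrongMonData (M : Type u₂) (M' : Type u₃) [Category.{v₂} M] [MonoidalCategory M]
    [Category.{v₃} M'] [MonoidalCategory M'] where
  T : M ⥤ M'
  εm : 𝟙_ M' ≅ T.obj (𝟙_ M)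
  μm : ∀ a b : M, T.obj a ⊗ T.obj b ≅ T.obj (a ⊗ b)

/-- The data of a strong monoidal functor is an actual strong monoidal functor. -/
structure IsStrongMon {M : Type u₂} {M' : Type u₃} [Category.{v₂} M] [MonoidalCategory M]
    [Category.{v₃} M'] [MonoidalCategory M'] (F : StrongMonData M M') : Prop where
  μ_nat : ∀ {a a' b b' : M} (f : a ⟶ a') (g : b ⟶ b'),
    (F.T.map f ⊗ₘ F.T.map g) ≫ (F.μm a' b').hom = (F.μm a b).hom ≫ F.T.map (f ⊗ₘ g)
  assoc : ∀ a b c : M,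
    ((F.μm a b).hom ▷ F.T.obj c) ≫ (F.μm (a ⊗ b) c).hom ≫ F.T.map (α_ a b c).hom
      = (α_ (F.T.obj a) (F.T.obj b) (F.T.obj c)).hom ≫ (F.T.obj a ◁ (F.μm b c).hom)
          ≫ (F.μm a (b ⊗ c)).hom
  left_unit : ∀ a : M,
    (F.εm.hom ▷ F.T.obj a) ≫ (F.μm (𝟙_ M) a).hom ≫ F.T.map (λ_ a).hom = (λ_ (F.T.obj a)).hom
  right_unit : ∀ a : M,
    (F.T.obj a ◁ F.εm.hom) ≫ (F.μm a (𝟙_ M)).hom ≫ F.T.map (ρ_ a).hom = (ρ_ (F.T.obj a)).hom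

/-- A morphism of `V`-Freyd categories. -/
structure VFreydHom {V : Type u₁} [Category.{v₁} V] {d : DuoidalData V}
    {M : Type u₂} [Category.{v₂} M] [MonoidalCategory M]
    {M' : Type u₃} [Category.{v₃} M'] [MonoidalCategory M']
    (C : VFreydData d M) (C' : VFreydData d M') where
  F₀ : StrongMonData M M'
  strong : IsStrongMon F₀
  app : ∀ a b : M, C.obj a b ⟶ C'.obj (F₀.T.obj a) (F₀.T.obj b)
  naturality : ∀ {a a' b b' : M} (f : a' ⟶ a) (g : b ⟶ b'),
    C.map f g ≫ app a' b' = app a b ≫ C'.map (F₀.T.map f) (F₀.T.map g)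
  hidt : ∀ a : M, C.idt a ≫ app a a = C'.idt (F₀.T.obj a)
  hseq : ∀ a b c : M,
    C.seq a b c ≫ app a c
      = d.s.tHom (app a b) (app b c) ≫ C'.seq (F₀.T.obj a) (F₀.T.obj b) (F₀.T.obj c)
  hpar : ∀ a₁ b₁ a₂ b₂ : M,
    d.p.tHom (app a₁ b₁) (app a₂ b₂)
        ≫ C'.par (F₀.T.obj a₁) (F₀.T.obj b₁) (F₀.T.obj a₂) (F₀.T.obj b₂)
        ≫ C'.map (𝟙 (F₀.T.obj a₁ ⊗ F₀.T.obj a₂)) (F₀.μm b₁ b₂).hom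
      = C.par a₁ b₁ a₂ b₂ ≫ app (a₁ ⊗ a₂) (b₁ ⊗ b₂) ≫ C'.map (F₀.μm a₁ a₂).hom
          (𝟙 (F₀.T.obj (b₁ ⊗ b₂)))

/-- An object of the category `Subset`: a set with a distinguished subset. -/
structure SubObj : Type (u + 1) where
  carrier : Type u
  dist : Set carrier

/-- A morphism of `Subset`: a function preserving the distinguished subsets. -/
@[ext]
structure SubHom (X Y : SubObj.{u}) where
  toFun : X.carrier → Y.carrier
  maps : ∀ a ∈ X.dist, toFun a ∈ Y.dist

instance : Category SubObj.{u} where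
  Hom := SubHom
  id X := ⟨id, fun a ha => ha⟩
  comp f g := ⟨fun a => g.toFun (f.toFun a), fun a ha => g.maps _ (f.maps a ha)⟩

/-- The cartesian product monoidal structure on `Subset`. -/
def cartSub : MonStrData SubObj.{u} where
  t X Y := ⟨X.carrier × Y.carrier, {p | p.1 ∈ X.dist ∧ p.2 ∈ Y.dist}⟩
  tHom f g := ⟨fun p => (f.toFun p.1, g.toFun p.2),
    fun p hp => ⟨f.maps _ hp.1, g.maps _ hp.2⟩⟩
  unit := ⟨PUnit, Set.univ⟩
  aHom X Y Z := ⟨fun p => (p.1.1, (p.1.2, p.2)), fun p hp => ⟨hp.1.1, hp.1.2, hp.2⟩⟩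
  aInv X Y Z := ⟨fun p => ((p.1, p.2.1), p.2.2), fun p hp => ⟨⟨hp.1, hp.2.1⟩, hp.2.2⟩⟩
  lHom X := ⟨fun p => p.2, fun p hp => hp.2⟩
  lInv X := ⟨fun x => (PUnit.unit, x), fun x hx => ⟨trivial, hx⟩⟩
  rHom X := ⟨fun p => p.1, fun p hp => hp.1⟩
  rInv X := ⟨fun x => (x, PUnit.unit), fun x hx => ⟨hx, trivial⟩⟩

/-- The disjunctive product monoidal structure on `Subset`:
`(X, A) ⊗ (Y, B) = (X × Y, (A × Y) ∪ (X × B))`. -/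
def disjSub : MonStrData SubObj.{u} where
  t X Y := ⟨{p : X.carrier × Y.carrier // p.1 ∈ X.dist ∨ p.2 ∈ Y.dist},
    {p | p.val.1 ∈ X.dist ∧ p.val.2 ∈ Y.dist}⟩
  tHom f g := ⟨fun p => ⟨(f.toFun p.val.1, g.toFun p.val.2),
      p.property.imp (f.maps _) (g.maps _)⟩,
    fun p hp => ⟨f.maps _ hp.1, g.maps _ hp.2⟩⟩
  unit := ⟨PUnit, Set.univ⟩
  aHom X Y Z := ⟨fun p => ⟨(p.val.1.val.1, ⟨(p.val.1.val.2, p.val.2),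
      p.property.elim (fun h => Or.inl h.2) Or.inr⟩),
      p.property.elim (fun h => Or.inl h.1)
        (fun hz => p.val.1.property.imp id (fun hy => ⟨hy, hz⟩))⟩,
    fun p hp => ⟨hp.1.1, hp.1.2, hp.2⟩⟩
  aInv X Y Z := ⟨fun p => ⟨(⟨(p.val.1, p.val.2.val.1),
      p.property.elim Or.inl (fun h => Or.inr h.1)⟩, p.val.2.val.2),
      p.property.elim (fun hx => p.val.2.property.elim (fun hy => Or.inl ⟨hx, hy⟩) Or.inr)
        (fun h => Or.inr h.2)⟩,
    fun p hp => ⟨⟨hp.1, hp.2.1⟩, hp.2.2⟩⟩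
  lHom X := ⟨fun p => p.val.2, fun p hp => hp.2⟩
  lInv X := ⟨fun x => ⟨(PUnit.unit, x), Or.inl trivial⟩, fun x hx => ⟨trivial, hx⟩⟩
  rHom X := ⟨fun p => p.val.1, fun p hp => hp.1⟩
  rInv X := ⟨fun x => ⟨(x, PUnit.unit), Or.inr trivial⟩, fun x hx => ⟨hx, trivial⟩⟩

/-- The duoidal data `(Subset, ⊗, (1,1), ×, (1,1))` on the category of distinguished
subsets, with `ζ` the restricted middle-four interchange, `Δ` and `∇` unitors, and `ε`
the identity. -/
def subsetDuo : DuoidalData SubObj.{u} where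
  p := disjSub
  s := cartSub
  zeta A B C D := ⟨fun p =>
      (⟨(p.val.1.1, p.val.2.1), p.property.imp And.left And.left⟩,
       ⟨(p.val.1.2, p.val.2.2), p.property.imp And.right And.right⟩),
    fun p hp => ⟨⟨hp.1.1, hp.2.1⟩, hp.1.2, hp.2.2⟩⟩
  delta := ⟨fun _ => (PUnit.unit, PUnit.unit), fun _ _ => ⟨trivial, trivial⟩⟩
  nabla := ⟨fun _ => PUnit.unit, fun _ _ => trivial⟩
  eps := ⟨fun _ => PUnit.unit, fun _ _ => trivial⟩

/-- The data of a Freyd category over the monoidal category `M`: a premonoidal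
category with the same objects as `M` (with whiskerings `wL`, `wR`) together with an
identity-on-objects strict premonoidal functor `J`. -/
structure FreydData (M : Type u₂) [Category.{v₂} M] [MonoidalCategory M] where
  hom : M → M → Type u
  ide : ∀ a : M, hom a a
  comp : ∀ {a b c : M}, hom a b → hom b c → hom a c
  wL : ∀ (x : M) {a b : M}, hom a b → hom (x ⊗ a) (x ⊗ b)
  wR : ∀ {a b : M}, hom a b → ∀ x : M, hom (a ⊗ x) (b ⊗ x)
  J : ∀ {a b : M}, (a ⟶ b) → hom a b

/-- Centrality of a morphism in the premonoidal part of a Freyd category. -/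
def FreydData.Central {M : Type u₂} [Category.{v₂} M] [MonoidalCategory M]
    (F : FreydData.{u} M) {a b : M} (f : F.hom a b) : Prop :=
  (∀ {a' b' : M} (g : F.hom a' b'),
      F.comp (F.wR f a') (F.wL b g) = F.comp (F.wL a g) (F.wR f b')) ∧
  (∀ {a' b' : M} (g : F.hom a' b'),
      F.comp (F.wL a' f) (F.wR g b) = F.comp (F.wR g a) (F.wL b' f))

/-- The data of a Freyd category is an actual Freyd category: `C` is a premonoidal
category, `J` is an identity-on-objects strict premonoidal functor, and the image of
`J` is central. -/
structure IsFreyd {M : Type u₂} [Category.{v₂} M] [MonoidalCategory M]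
    (F : FreydData.{u} M) : Prop where
  id_comp : ∀ {a b : M} (f : F.hom a b), F.comp (F.ide a) f = f
  comp_id : ∀ {a b : M} (f : F.hom a b), F.comp f (F.ide b) = f
  comp_assoc : ∀ {a b c e : M} (f : F.hom a b) (g : F.hom b c) (h : F.hom c e),
    F.comp (F.comp f g) h = F.comp f (F.comp g h)
  J_id : ∀ a : M, F.J (𝟙 a) = F.ide a
  J_comp : ∀ {a b c : M} (f : a ⟶ b) (g : b ⟶ c), F.J (f ≫ g) = F.comp (F.J f) (F.J g)
  wL_id : ∀ x a : M, F.wL x (F.ide a) = F.ide (x ⊗ a)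
  wL_comp : ∀ (x : M) {a b c : M} (f : F.hom a b) (g : F.hom b c),
    F.wL x (F.comp f g) = F.comp (F.wL x f) (F.wL x g)
  wR_id : ∀ a x : M, F.wR (F.ide a) x = F.ide (a ⊗ x)
  wR_comp : ∀ {a b c : M} (f : F.hom a b) (g : F.hom b c) (x : M),
    F.wR (F.comp f g) x = F.comp (F.wR f x) (F.wR g x)
  wL_J : ∀ (x : M) {a b : M} (f : a ⟶ b), F.wL x (F.J f) = F.J (x ◁ f)
  wR_J : ∀ {a b : M} (f : a ⟶ b) (x : M), F.wR (F.J f) x = F.J (f ▷ x)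
  central_J : ∀ {a b : M} (f : a ⟶ b), F.Central (F.J f)
  assoc_nat₁ : ∀ {a b : M} (f : F.hom a b) (y z : M),
    F.comp (F.wR (F.wR f y) z) (F.J (α_ b y z).hom)
      = F.comp (F.J (α_ a y z).hom) (F.wR f (y ⊗ z))
  assoc_nat₂ : ∀ (x : M) {a b : M} (f : F.hom a b) (z : M),
    F.comp (F.wR (F.wL x f) z) (F.J (α_ x b z).hom)
      = F.comp (F.J (α_ x a z).hom) (F.wL x (F.wR f z))
  assoc_nat₃ : ∀ (x y : M) {a b : M} (f : F.hom a b),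
    F.comp (F.wL (x ⊗ y) f) (F.J (α_ x y b).hom)
      = F.comp (F.J (α_ x y a).hom) (F.wL x (F.wL y f))
  lunit_nat : ∀ {a b : M} (f : F.hom a b),
    F.comp (F.wL (𝟙_ M) f) (F.J (λ_ b).hom) = F.comp (F.J (λ_ a).hom) f
  runit_nat : ∀ {a b : M} (f : F.hom a b),
    F.comp (F.wR f (𝟙_ M)) (F.J (ρ_ b).hom) = F.comp (F.J (ρ_ a).hom) f

/-- A morphism of Freyd categories: a strong monoidal functor `F₀` on the monoidal
parts and a strong premonoidal functor `F₁` on the premonoidal parts commuting with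
the `J`s. -/
structure FreydHom {M : Type u₂} {M' : Type u₃} [Category.{v₂} M] [MonoidalCategory M]
    [Category.{v₃} M'] [MonoidalCategory M'] (C : FreydData.{u} M)
    (C' : FreydData.{u'} M') where
  F₀ : StrongMonData M M'
  strong : IsStrongMon F₀
  F₁ : ∀ {a b : M}, C.hom a b → C'.hom (F₀.T.obj a) (F₀.T.obj b)
  F₁_id : ∀ a : M, F₁ (C.ide a) = C'.ide (F₀.T.obj a)
  F₁_comp : ∀ {a b c : M} (f : C.hom a b) (g : C.hom b c),
    F₁ (C.comp f g) = C'.comp (F₁ f) (F₁ g)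
  F₁_J : ∀ {a b : M} (f : a ⟶ b), F₁ (C.J f) = C'.J (F₀.T.map f)
  F₁_wL : ∀ (x : M) {a b : M} (f : C.hom a b),
    C'.comp (C'.J (F₀.μm x a).hom) (F₁ (C.wL x f))
      = C'.comp (C'.wL (F₀.T.obj x) (F₁ f)) (C'.J (F₀.μm x b).hom)
  F₁_wR : ∀ {a b : M} (f : C.hom a b) (x : M),
    C'.comp (C'.J (F₀.μm a x).hom) (F₁ (C.wR f x))
      = C'.comp (C'.wR (F₁ f) (F₀.T.obj x)) (C'.J (F₀.μm b x).hom)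

/-- The functor `𝔉 : Freyd → Subset-Freyd` on objects: `𝔉(C)(a,b)` is `C(a,b)` with
the image of `J` as distinguished subset. -/
def frey2sub {M : Type u₂} [Category.{v₂} M] [MonoidalCategory M]
    (F : FreydData.{u} M) (h : IsFreyd F) : VFreydData subsetDuo.{u} M where
  obj a b := ⟨F.hom a b, Set.range (fun f : a ⟶ b => F.J f)⟩
  map f g := ⟨fun k => F.comp (F.J f) (F.comp k (F.J g)),
    fun k hk => by
      obtain ⟨k', rfl⟩ := hk
      exact ⟨f ≫ k' ≫ g, by simp only [h.J_comp]⟩⟩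
  idt a := ⟨fun _ => F.ide a, fun _ _ => ⟨𝟙 a, h.J_id a⟩⟩
  seq a b c := ⟨fun p => F.comp p.1 p.2,
    fun p hp => by
      obtain ⟨⟨k₁, e₁⟩, ⟨k₂, e₂⟩⟩ := hp
      exact ⟨k₁ ≫ k₂, by simp only [h.J_comp, e₁, e₂]⟩⟩
  zero := ⟨fun _ => F.ide (𝟙_ M), fun _ _ => ⟨𝟙 (𝟙_ M), h.J_id _⟩⟩
  par a₁ b₁ a₂ b₂ := ⟨fun p => F.comp (F.wR p.val.1 a₂) (F.wL b₁ p.val.2),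
    fun p hp => by
      obtain ⟨⟨k₁, e₁⟩, ⟨k₂, e₂⟩⟩ := hp
      exact ⟨k₁ ⊗ₘ k₂, by
        simp only [MonoidalCategory.tensorHom_def, h.J_comp, ← h.wR_J, ← h.wL_J, e₁, e₂]⟩⟩

/-- The functor `𝔘 : Subset-Freyd → Freyd` on objects: `𝔘(C)` has the underlying sets
of `C(a,b)` as homsets, with composition `seq`, identities `idt(⋆)`,
`J(f) = C(id,f)(idt(⋆))`, and whiskerings induced by `par` and `idt(⋆)`. -/
def sub2frey {M : Type u₂} [Category.{v₂} M] [MonoidalCategory M]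
    (C : VFreydData subsetDuo.{u} M) : FreydData.{u} M where
  hom a b := (C.obj a b).carrier
  ide a := SubHom.toFun (C.idt a) PUnit.unit
  comp f g := SubHom.toFun (C.seq _ _ _) (f, g)
  wL := fun x {a b} f => SubHom.toFun (C.par x x a b)
    ⟨(SubHom.toFun (C.idt x) PUnit.unit, f), Or.inl ((C.idt x).maps _ trivial)⟩
  wR := fun {a b} f x => SubHom.toFun (C.par a b x x)
    ⟨(f, SubHom.toFun (C.idt x) PUnit.unit), Or.inr ((C.idt x).maps _ trivial)⟩
  J f := SubHom.toFun (C.map (𝟙 _) f) (SubHom.toFun (C.idt _) PUnit.unit)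

/-- The identity strong monoidal functor data. -/
def idStrongMon (M : Type u₂) [Category.{v₂} M] [MonoidalCategory M] :
    StrongMonData M M where
  T := Functor.id M
  εm := Iso.refl _
  μm a b := Iso.refl _

/-- A `Subset`-Freyd category is *pure-image* when the distinguished subset of
`C(a,b)` is exactly `C(id, M(a,b))(idt(⋆))`, the image of the pure morphisms. -/
def PureImage {M : Type u₂} [Category.{v₂} M] [MonoidalCategory M]
    (C : VFreydData subsetDuo.{u} M) : Prop :=
  ∀ a b : M, (C.obj a b).dist
    = Set.range (fun f : a ⟶ b =>
        SubHom.toFun (C.map (𝟙 a) f) (SubHom.toFun (C.idt a) PUnit.unit))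


section Helpers

lemma SubHom.congr_fun' {X Y : SubObj.{u}} {f g : X ⟶ Y} (h : f = g) (x : X.carrier) :
    SubHom.toFun f x = SubHom.toFun g x := by rw [h]

variable {M : Type u₂} [Category.{v₂} M] [MonoidalCategory M]
variable (C : VFreydData subsetDuo.{u} M) (hC : IsVFreyd C)
include hC

lemma seq_idt_pt {a b : M} (x : (C.obj a b).carrier) :
    SubHom.toFun (C.seq a b b) (x, SubHom.toFun (C.idt b) PUnit.unit) = x :=
  SubHom.congr_fun' (hC.seq_idt a b) (x, PUnit.unit)

lemma idt_seq_pt {a b : M} (x : (C.obj a b).carrier) :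
    SubHom.toFun (C.seq a a b) (SubHom.toFun (C.idt a) PUnit.unit, x) = x :=
  SubHom.congr_fun' (hC.idt_seq a b) (PUnit.unit, x)

lemma map_id_pt {a b : M} (x : (C.obj a b).carrier) :
    SubHom.toFun (C.map (𝟙 a) (𝟙 b)) x = x :=
  SubHom.congr_fun' (hC.map_id a b) x

lemma seq_nat_pt {a a' c c' : M} (f : a' ⟶ a) (g : c ⟶ c') (b : M)
    (x : (C.obj a b).carrier) (y : (C.obj b c).carrier) :
    SubHom.toFun (C.seq a' b c')
        (SubHom.toFun (C.map f (𝟙 b)) x, SubHom.toFun (C.map (𝟙 b) g) y)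
      = SubHom.toFun (C.map f g) (SubHom.toFun (C.seq a b c) (x, y)) :=
  SubHom.congr_fun' (hC.seq_nat f g b) (x, y)

lemma J_seq {a' a b' : M} (f : a' ⟶ a) (z : (C.obj a b').carrier) :
    SubHom.toFun (C.seq a' a b') ((sub2frey C).J f, z)
      = SubHom.toFun (C.map f (𝟙 b')) z := by
  have h0 : (sub2frey C).J f
      = SubHom.toFun (C.map f (𝟙 a)) (SubHom.toFun (C.idt a) PUnit.unit) :=
    SubHom.congr_fun' (hC.idt_extra f) PUnit.unit
  have h1 := seq_nat_pt C hC f (𝟙 b') a (SubHom.toFun (C.idt a) PUnit.unit) z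
  rw [map_id_pt C hC, idt_seq_pt C hC] at h1
  rw [h0]
  exact h1

lemma seq_J {a b b' : M} (g : b ⟶ b') (z : (C.obj a b).carrier) :
    SubHom.toFun (C.seq a b b') (z, (sub2frey C).J g)
      = SubHom.toFun (C.map (𝟙 a) g) z := by
  have h1 := seq_nat_pt C hC (𝟙 a) g b z (SubHom.toFun (C.idt b) PUnit.unit)
  rw [map_id_pt C hC, seq_idt_pt C hC] at h1
  exact h1

lemma map_pt {a' a b b' : M} (f : a' ⟶ a) (g : b ⟶ b') (k : (C.obj a b).carrier) :
    SubHom.toFun (C.map f g) k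
      = SubHom.toFun (C.seq a' a b')
          ((sub2frey C).J f, SubHom.toFun (C.seq a b b') (k, (sub2frey C).J g)) := by
  rw [seq_J C hC, J_seq C hC]
  have h2 := SubHom.congr_fun' (hC.map_comp (𝟙 a) f g (𝟙 b')) k
  rw [Category.comp_id, Category.comp_id] at h2
  exact h2

lemma parJ {a₁ b₁ a₂ b₂ : M} (f : (C.obj a₁ b₁).carrier) (g : (C.obj a₂ b₂).carrier)
    (hf : f ∈ (C.obj a₁ b₁).dist ∨ g ∈ (C.obj a₂ b₂).dist) :
    SubHom.toFun (C.seq (a₁ ⊗ a₂) (b₁ ⊗ a₂) (b₁ ⊗ b₂))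
      (SubHom.toFun (C.par a₁ b₁ a₂ a₂)
        ⟨(f, SubHom.toFun (C.idt a₂) PUnit.unit), Or.inr ((C.idt a₂).maps _ trivial)⟩,
       SubHom.toFun (C.par b₁ b₁ a₂ b₂)
        ⟨(SubHom.toFun (C.idt b₁) PUnit.unit, g), Or.inl ((C.idt b₁).maps _ trivial)⟩)
      = SubHom.toFun (C.par a₁ b₁ a₂ b₂) ⟨(f, g), hf⟩ := by
  have h1 :
      SubHom.toFun (C.seq (a₁ ⊗ a₂) (b₁ ⊗ a₂) (b₁ ⊗ b₂))
        (SubHom.toFun (C.par a₁ b₁ a₂ a₂)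
          ⟨(f, SubHom.toFun (C.idt a₂) PUnit.unit), Or.inr ((C.idt a₂).maps _ trivial)⟩,
         SubHom.toFun (C.par b₁ b₁ a₂ b₂)
          ⟨(SubHom.toFun (C.idt b₁) PUnit.unit, g), Or.inl ((C.idt b₁).maps _ trivial)⟩)
      = SubHom.toFun (C.par a₁ b₁ a₂ b₂)
          ⟨(SubHom.toFun (C.seq a₁ b₁ b₁) (f, SubHom.toFun (C.idt b₁) PUnit.unit),
            SubHom.toFun (C.seq a₂ a₂ b₂) (SubHom.toFun (C.idt a₂) PUnit.unit, g)),
           hf.imp (fun h => (seq_idt_pt C hC f).symm ▸ h)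
             (fun h => (idt_seq_pt C hC g).symm ▸ h)⟩ :=
    SubHom.congr_fun' (hC.exchange a₁ b₁ b₁ a₂ a₂ b₂)
      ⟨((f, SubHom.toFun (C.idt b₁) PUnit.unit),
        (SubHom.toFun (C.idt a₂) PUnit.unit, g)),
       hf.imp (fun h => ⟨h, (C.idt b₁).maps _ trivial⟩)
         (fun h => ⟨(C.idt a₂).maps _ trivial, h⟩)⟩
  refine h1.trans (congrArg _ (Subtype.ext ?_))
  dsimp only
  rw [seq_idt_pt C hC, idt_seq_pt C hC]

end Helpers


section Phi

variable {M : Type u₂} {M' : Type u₃} [Category.{v₂} M] [MonoidalCategory M]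
  [Category.{v₃} M'] [MonoidalCategory M']

/-- `𝔉` on morphisms. -/
def phiToFun {F : FreydData.{u} M} (h : IsFreyd F) {F' : FreydData.{u} M'}
    (h' : IsFreyd F') (G : FreydHom F F') :
    VFreydHom (frey2sub F h) (frey2sub F' h') where
  F₀ := G.F₀
  strong := G.strong
  app a b := ⟨fun f => G.F₁ f, by
    rintro _ ⟨k, rfl⟩
    exact ⟨G.F₀.T.map k, (G.F₁_J k).symm⟩⟩
  naturality {a a' b b'} f g := by
    apply SubHom.ext
    funext k
    show G.F₁ (F.comp (F.J f) (F.comp k (F.J g)))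
      = F'.comp (F'.J (G.F₀.T.map f)) (F'.comp (G.F₁ k) (F'.J (G.F₀.T.map g)))
    erw [G.F₁_comp, G.F₁_comp, G.F₁_J, G.F₁_J]
  hidt a := by
    apply SubHom.ext
    funext x
    exact G.F₁_id a
  hseq a b c := by
    apply SubHom.ext
    funext p
    exact G.F₁_comp p.1 p.2
  hpar a₁ b₁ a₂ b₂ := by
    apply SubHom.ext
    funext p
    obtain ⟨⟨f, g⟩, hp⟩ := p
    show F'.comp (F'.J (𝟙 _))
        (F'.comp (F'.comp (F'.wR (G.F₁ f) _) (F'.wL _ (G.F₁ g)))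
          (F'.J (G.F₀.μm b₁ b₂).hom))
      = F'.comp (F'.J (G.F₀.μm a₁ a₂).hom)
        (F'.comp (G.F₁ (F.comp (F.wR f a₂) (F.wL b₁ g))) (F'.J (𝟙 _)))
    erw [h'.J_id, h'.J_id, h'.id_comp, h'.comp_id, G.F₁_comp,
      ← h'.comp_assoc, G.F₁_wR, h'.comp_assoc, h'.comp_assoc, G.F₁_wL]

/-- `𝔉⁻¹` on morphisms. -/
def phiInvFun {F : FreydData.{u} M} (h : IsFreyd F) {F' : FreydData.{u} M'}
    (h' : IsFreyd F') (H : VFreydHom (frey2sub F h) (frey2sub F' h')) :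
    FreydHom F F' where
  F₀ := H.F₀
  strong := H.strong
  F₁ {a b} f := SubHom.toFun (H.app a b) f
  F₁_id a := SubHom.congr_fun' (H.hidt a) PUnit.unit
  F₁_comp {a b c} f g := SubHom.congr_fun' (H.hseq a b c) (f, g)
  F₁_J {a b} f := by
    have h1 : SubHom.toFun (H.app a b)
          (F.comp (F.J (𝟙 a)) (F.comp (F.ide a) (F.J f)))
        = F'.comp (F'.J (H.F₀.T.map (𝟙 a)))
            (F'.comp (SubHom.toFun (H.app a a) (F.ide a)) (F'.J (H.F₀.T.map f))) :=
      SubHom.congr_fun' (H.naturality (𝟙 a) f) (F.ide a)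
    have hid : SubHom.toFun (H.app a a) (F.ide a) = F'.ide (H.F₀.T.obj a) :=
      SubHom.congr_fun' (H.hidt a) PUnit.unit
    rw [h.J_id, h.id_comp, h.id_comp, CategoryTheory.Functor.map_id, h'.J_id, h'.id_comp,
      hid, h'.id_comp] at h1
    exact h1
  F₁_wL x {a b} f := by
    have h1 : F'.comp (F'.J (𝟙 _))
          (F'.comp
            (F'.comp (F'.wR (SubHom.toFun (H.app x x) (F.ide x)) _)
              (F'.wL _ (SubHom.toFun (H.app a b) f)))
            (F'.J (H.F₀.μm x b).hom))
        = F'.comp (F'.J (H.F₀.μm x a).hom)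
          (F'.comp
            (SubHom.toFun (H.app (x ⊗ a) (x ⊗ b))
              (F.comp (F.wR (F.ide x) a) (F.wL x f)))
            (F'.J (𝟙 _))) :=
      SubHom.congr_fun' (H.hpar x x a b) ⟨(F.ide x, f), Or.inl ⟨𝟙 x, h.J_id x⟩⟩
    have hid : SubHom.toFun (H.app x x) (F.ide x) = F'.ide (H.F₀.T.obj x) :=
      SubHom.congr_fun' (H.hidt x) PUnit.unit
    erw [h'.J_id, h'.J_id, h'.id_comp, h'.comp_id, hid, h'.wR_id, h'.id_comp,
      h.wR_id, h.id_comp] at h1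
    exact h1.symm
  F₁_wR {a b} f x := by
    have h1 : F'.comp (F'.J (𝟙 _))
          (F'.comp
            (F'.comp (F'.wR (SubHom.toFun (H.app a b) f) _)
              (F'.wL _ (SubHom.toFun (H.app x x) (F.ide x))))
            (F'.J (H.F₀.μm b x).hom))
        = F'.comp (F'.J (H.F₀.μm a x).hom)
          (F'.comp
            (SubHom.toFun (H.app (a ⊗ x) (b ⊗ x))
              (F.comp (F.wR f x) (F.wL b (F.ide x))))
            (F'.J (𝟙 _))) :=
      SubHom.congr_fun' (H.hpar a b x x) ⟨(f, F.ide x), Or.inr ⟨𝟙 x, h.J_id x⟩⟩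
    have hid : SubHom.toFun (H.app x x) (F.ide x) = F'.ide (H.F₀.T.obj x) :=
      SubHom.congr_fun' (H.hidt x) PUnit.unit
    erw [h'.J_id, h'.J_id, h'.id_comp, h'.comp_id, hid, h'.wL_id, h'.comp_id,
      h.wL_id, h.comp_id] at h1
    exact h1.symm

/-- The bijection on morphisms witnessing that `𝔉` is fully faithful. -/
def phiEquiv {F : FreydData.{u} M} (h : IsFreyd F) {F' : FreydData.{u} M'}
    (h' : IsFreyd F') : FreydHom F F' ≃ VFreydHom (frey2sub F h) (frey2sub F' h') where
  toFun := phiToFun h h'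
  invFun := phiInvFun h h'
  left_inv G := rfl
  right_inv H := rfl

end Phi


section Psi

variable {M' : Type u₂} {M : Type u₃} [Category.{v₂} M'] [MonoidalCategory M']
  [Category.{v₃} M] [MonoidalCategory M]

lemma isStrongMon_id (M : Type u₂) [Category.{v₂} M] [MonoidalCategory M] :
    IsStrongMon (idStrongMon M) := by
  constructor <;> intros <;> simp [idStrongMon]

/-- The identity morphism of `Subset`-Freyd categories. -/
def idVFreydHom (C : VFreydData subsetDuo.{u} M) : VFreydHom C C where
  F₀ := idStrongMon M
  strong := isStrongMon_id M
  app a b := 𝟙 (C.obj a b)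
  naturality f g := rfl
  hidt a := rfl
  hseq a b c := rfl
  hpar a₁ b₁ a₂ b₂ := rfl

/-- Postcomposition with the unit of `𝔉 ⊣ 𝔘` at a pure-image object. -/
def psiToFun (D : VFreydData subsetDuo.{u} M') (hP : PureImage D)
    (C : VFreydData subsetDuo.{u} M) (hC : IsVFreyd C) (hU : IsFreyd (sub2frey C))
    (G : VFreydHom D C) : VFreydHom D (frey2sub (sub2frey C) hU) where
  F₀ := G.F₀
  strong := G.strong
  app a b := ⟨fun x => @SubHom.toFun (D.obj a b)
      (C.obj (G.F₀.T.obj a) (G.F₀.T.obj b)) (G.app a b) x, by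
    intro x hx
    show SubHom.toFun (G.app a b) x ∈ Set.range fun f => (sub2frey C).J f
    rw [hP a b] at hx
    obtain ⟨k, hk⟩ := hx
    refine ⟨G.F₀.T.map k, ?_⟩
    show SubHom.toFun (C.map (𝟙 (G.F₀.T.obj a)) (G.F₀.T.map k))
        (SubHom.toFun (C.idt (G.F₀.T.obj a)) PUnit.unit) = SubHom.toFun (G.app a b) x
    rw [← hk]
    have h1 : SubHom.toFun (G.app a b)
          (SubHom.toFun (D.map (𝟙 a) k) (SubHom.toFun (D.idt a) PUnit.unit))
        = SubHom.toFun (C.map (G.F₀.T.map (𝟙 a)) (G.F₀.T.map k))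
            (SubHom.toFun (G.app a a) (SubHom.toFun (D.idt a) PUnit.unit)) :=
      SubHom.congr_fun' (G.naturality (𝟙 a) k) (SubHom.toFun (D.idt a) PUnit.unit)
    have h2 : SubHom.toFun (G.app a a) (SubHom.toFun (D.idt a) PUnit.unit)
        = SubHom.toFun (C.idt (G.F₀.T.obj a)) PUnit.unit :=
      SubHom.congr_fun' (G.hidt a) PUnit.unit
    rw [h2, CategoryTheory.Functor.map_id] at h1
    exact h1.symm⟩
  naturality {a a' b b'} f g := by
    apply SubHom.ext
    funext x
    have n : SubHom.toFun (G.app a' b') (SubHom.toFun (D.map f g) x)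
        = SubHom.toFun (C.map (G.F₀.T.map f) (G.F₀.T.map g))
            (SubHom.toFun (G.app a b) x) :=
      SubHom.congr_fun' (G.naturality f g) x
    exact n.trans (map_pt C hC _ _ _)
  hidt a := by
    apply SubHom.ext
    funext u
    cases u
    exact SubHom.congr_fun' (G.hidt a) PUnit.unit
  hseq a b c := by
    apply SubHom.ext
    funext p
    exact SubHom.congr_fun' (G.hseq a b c) p
  hpar a₁ b₁ a₂ b₂ := by
    apply SubHom.ext
    funext p
    obtain ⟨⟨x, y⟩, hxy⟩ := p
    have hd : SubHom.toFun (G.app a₁ b₁) x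
          ∈ (C.obj (G.F₀.T.obj a₁) (G.F₀.T.obj b₁)).dist
        ∨ SubHom.toFun (G.app a₂ b₂) y
          ∈ (C.obj (G.F₀.T.obj a₂) (G.F₀.T.obj b₂)).dist :=
      hxy.imp (fun hh => (G.app a₁ b₁).maps x hh) (fun hh => (G.app a₂ b₂).maps y hh)
    have e1 := parJ C hC (SubHom.toFun (G.app a₁ b₁) x) (SubHom.toFun (G.app a₂ b₂) y) hd
    have hp : SubHom.toFun (C.map (𝟙 (G.F₀.T.obj a₁ ⊗ G.F₀.T.obj a₂)) (G.F₀.μm b₁ b₂).hom)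
          (SubHom.toFun
            (C.par (G.F₀.T.obj a₁) (G.F₀.T.obj b₁) (G.F₀.T.obj a₂) (G.F₀.T.obj b₂))
            ⟨(SubHom.toFun (G.app a₁ b₁) x, SubHom.toFun (G.app a₂ b₂) y), hd⟩)
        = SubHom.toFun (C.map (G.F₀.μm a₁ a₂).hom (𝟙 (G.F₀.T.obj (b₁ ⊗ b₂))))
            (SubHom.toFun (G.app (a₁ ⊗ a₂) (b₁ ⊗ b₂))
              (SubHom.toFun (D.par a₁ b₁ a₂ b₂) ⟨(x, y), hxy⟩)) :=
      SubHom.congr_fun' (G.hpar a₁ b₁ a₂ b₂) ⟨(x, y), hxy⟩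
    exact (map_pt C hC (𝟙 _) (G.F₀.μm b₁ b₂).hom _).symm.trans
      ((congrArg (SubHom.toFun (C.map (𝟙 _) (G.F₀.μm b₁ b₂).hom)) e1).trans
        (hp.trans (map_pt C hC (G.F₀.μm a₁ a₂).hom (𝟙 _) _)))

/-- Precomposition with the counit of `𝔉 ⊣ 𝔘`. -/
def psiInvFun (D : VFreydData subsetDuo.{u} M')
    (C : VFreydData subsetDuo.{u} M) (hC : IsVFreyd C) (hU : IsFreyd (sub2frey C))
    (H : VFreydHom D (frey2sub (sub2frey C) hU)) : VFreydHom D C where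
  F₀ := H.F₀
  strong := H.strong
  app a b := ⟨fun x => @SubHom.toFun (D.obj a b)
      ((frey2sub (sub2frey C) hU).obj (H.F₀.T.obj a) (H.F₀.T.obj b)) (H.app a b) x, by
    intro x hx
    show SubHom.toFun (H.app a b) x ∈ (C.obj (H.F₀.T.obj a) (H.F₀.T.obj b)).dist
    obtain ⟨k, hk⟩ := (H.app a b).maps x hx
    rw [← hk]
    exact (C.map (𝟙 _) k).maps _ ((C.idt _).maps _ trivial)⟩
  naturality {a a' b b'} f g := by
    apply SubHom.ext
    funext x
    have n : SubHom.toFun (H.app a' b') (SubHom.toFun (D.map f g) x)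
        = SubHom.toFun (C.seq _ _ _) ((sub2frey C).J (H.F₀.T.map f),
            SubHom.toFun (C.seq _ _ _)
              (@SubHom.toFun (D.obj a b)
                ((frey2sub (sub2frey C) hU).obj (H.F₀.T.obj a) (H.F₀.T.obj b))
                (H.app a b) x, (sub2frey C).J (H.F₀.T.map g))) :=
      SubHom.congr_fun' (H.naturality f g) x
    exact n.trans (map_pt C hC _ _ _).symm
  hidt a := by
    apply SubHom.ext
    funext u
    cases u
    exact SubHom.congr_fun' (H.hidt a) PUnit.unit
  hseq a b c := by
    apply SubHom.ext
    funext p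
    exact SubHom.congr_fun' (H.hseq a b c) p
  hpar a₁ b₁ a₂ b₂ := by
    apply SubHom.ext
    funext p
    obtain ⟨⟨x, y⟩, hxy⟩ := p
    have hd : @SubHom.toFun (D.obj a₁ b₁)
            ((frey2sub (sub2frey C) hU).obj (H.F₀.T.obj a₁) (H.F₀.T.obj b₁))
            (H.app a₁ b₁) x
          ∈ (C.obj (H.F₀.T.obj a₁) (H.F₀.T.obj b₁)).dist
        ∨ @SubHom.toFun (D.obj a₂ b₂)
            ((frey2sub (sub2frey C) hU).obj (H.F₀.T.obj a₂) (H.F₀.T.obj b₂))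
            (H.app a₂ b₂) y
          ∈ (C.obj (H.F₀.T.obj a₂) (H.F₀.T.obj b₂)).dist := by
      refine hxy.imp (fun hh => ?_) (fun hh => ?_)
      · obtain ⟨k, hk⟩ := (H.app a₁ b₁).maps x hh
        rw [← hk]
        exact (C.map (𝟙 _) k).maps _ ((C.idt _).maps _ trivial)
      · obtain ⟨k, hk⟩ := (H.app a₂ b₂).maps y hh
        rw [← hk]
        exact (C.map (𝟙 _) k).maps _ ((C.idt _).maps _ trivial)
    have e1 := parJ C hC
      (@SubHom.toFun (D.obj a₁ b₁)
        ((frey2sub (sub2frey C) hU).obj (H.F₀.T.obj a₁) (H.F₀.T.obj b₁)) (H.app a₁ b₁) x)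
      (@SubHom.toFun (D.obj a₂ b₂)
        ((frey2sub (sub2frey C) hU).obj (H.F₀.T.obj a₂) (H.F₀.T.obj b₂)) (H.app a₂ b₂) y)
      hd
    exact (congrArg (SubHom.toFun (C.map (𝟙 _) (H.F₀.μm b₁ b₂).hom)) e1.symm).trans
      ((map_pt C hC (𝟙 _) (H.F₀.μm b₁ b₂).hom _).trans
        ((SubHom.congr_fun' (H.hpar a₁ b₁ a₂ b₂) ⟨(x, y), hxy⟩).trans
          (map_pt C hC (H.F₀.μm a₁ a₂).hom (𝟙 _) _).symm))

/-- The bijection on morphisms witnessing coreflectivity. -/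
def psiEquiv (D : VFreydData subsetDuo.{u} M') (hP : PureImage D)
    (C : VFreydData subsetDuo.{u} M) (hC : IsVFreyd C) (hU : IsFreyd (sub2frey C)) :
    VFreydHom D C ≃ VFreydHom D (frey2sub (sub2frey C) hU) where
  toFun := psiToFun D hP C hC hU
  invFun := psiInvFun D C hC hU
  left_inv G := rfl
  right_inv H := rfl

end Psi

/-- The full subcategory of `Subset-Freyd` on the `Subset`-Freyd categories whose
distinguished subsets are exactly the images of the pure morphisms is a full
coreflective subcategory of `Subset-Freyd` and is equivalent to the category `Freyd`:
`𝔉` lands in it, the counit at such objects is invertible, `𝔉` is fully faithful onto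
it, and it is coreflective via `𝔉𝔘` and the counit. -/
theorem pure_image_coreflective_equiv_freyd :
    -- 𝔉 lands in the full subcategory
    (∀ {M : Type u₂} [Category.{v₂} M] [MonoidalCategory M]
      (F : FreydData.{u} M) (h : IsFreyd F), PureImage (frey2sub F h)) ∧
    -- the counit is invertible exactly on the full subcategory
    (∀ {M : Type u₂} [Category.{v₂} M] [MonoidalCategory M]
      (C : VFreydData subsetDuo.{u} M) (hC : IsVFreyd C)
      (hU : IsFreyd (sub2frey C)),
      PureImage C ↔
        ∃ (ε : VFreydHom (frey2sub (sub2frey C) hU) C)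
          (δ : VFreydHom C (frey2sub (sub2frey C) hU)),
          ε.F₀ = idStrongMon M ∧ δ.F₀ = idStrongMon M ∧
          (∀ a b : M, HEq (SubHom.toFun (ε.app a b))
            (fun f : (C.obj a b).carrier => f)) ∧
          (∀ a b : M, HEq (SubHom.toFun (δ.app a b))
            (fun f : (C.obj a b).carrier => f))) ∧
    -- 𝔉 : Freyd → Subset-Freyd is fully faithful onto the full subcategory
    (∀ {M : Type u₂} {M' : Type u₃} [Category.{v₂} M] [MonoidalCategory M]
      [Category.{v₃} M'] [MonoidalCategory M']
      (F : FreydData.{u} M) (h : IsFreyd F) (F' : FreydData.{u} M') (h' : IsFreyd F'),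
      ∃ Φ : FreydHom F F' ≃ VFreydHom (frey2sub F h) (frey2sub F' h'),
        ∀ G : FreydHom F F',
          (Φ G).F₀ = G.F₀ ∧
          ∀ a b : M, HEq (SubHom.toFun ((Φ G).app a b))
            (fun f : F.hom a b => (G.F₁ f : F'.hom (G.F₀.T.obj a) (G.F₀.T.obj b)))) ∧
    -- coreflectivity: morphisms from pure-image objects factor through the counit
    (∀ {M' : Type u₂} {M : Type u₃} [Category.{v₂} M'] [MonoidalCategory M']
      [Category.{v₃} M] [MonoidalCategory M]
      (D : VFreydData subsetDuo.{u} M') (hD : IsVFreyd D) (hP : PureImage D)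
      (C : VFreydData subsetDuo.{u} M) (hC : IsVFreyd C)
      (hU : IsFreyd (sub2frey C)),
      ∃ Ψ : VFreydHom D C ≃ VFreydHom D (frey2sub (sub2frey C) hU),
        ∀ G : VFreydHom D C,
          (Ψ G).F₀ = G.F₀ ∧
          ∀ a b : M', HEq (SubHom.toFun ((Ψ G).app a b))
            (SubHom.toFun (G.app a b))) := by
  refine ⟨?_, ?_, ?_, ?_⟩
  · -- Part 1: 𝔉 lands in the full subcategory
    intro M _ _ F h a b
    refine congrArg Set.range (funext fun f => ?_)
    show F.J f = F.comp (F.J (𝟙 a)) (F.comp (F.ide a) (F.J f))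
    rw [h.J_id, h.id_comp, h.id_comp]
  · -- Part 2: counit invertible iff pure-image
    intro M _ _ C hC hU
    constructor
    · intro hP
      exact ⟨psiInvFun (frey2sub (sub2frey C) hU) C hC hU (idVFreydHom _),
        psiToFun C hP C hC hU (idVFreydHom C), rfl, rfl,
        fun a b => HEq.rfl, fun a b => HEq.rfl⟩
    · rintro ⟨ε, δ, hε0, hδ0, hεa, hδa⟩
      intro a b
      refine Set.Subset.antisymm ?_ ?_
      · obtain ⟨F₀, strong, app, nat, hid, hsq, hpr⟩ := δ
        have hF : F₀ = idStrongMon M := hδ0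
        subst hF
        have ha := eq_of_heq (hδa a b)
        intro x hx
        have hm := (app a b).maps x hx
        rw [ha] at hm
        exact hm
      · obtain ⟨F₀, strong, app, nat, hid, hsq, hpr⟩ := ε
        have hF : F₀ = idStrongMon M := hε0
        subst hF
        have ha := eq_of_heq (hεa a b)
        intro x hx
        have hm := (app a b).maps x hx
        rw [ha] at hm
        exact hm
  · -- Part 3: 𝔉 fully faithful
    intro M M' _ _ _ _ F h F' h'
    exact ⟨phiEquiv h h', fun G => ⟨rfl, fun a b => HEq.rfl⟩⟩
  · -- Part 4: coreflectivity
    intro M' M _ _ _ _ D hD hP C hC hU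
    exact ⟨psiEquiv D hP C hC hU, fun G => ⟨rfl, fun a b => HEq.rfl⟩⟩
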